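/- arXiv:2412.04437 — 7 statements merged into one kernel-verified Lean document; each statement's English description precedes it below -/
import Mathlib

section
/- Let (Q, ν_Q) be a nontrivial commutative valued ring, and let N, N′ be finite free valued modules over Q with a ν_N-orthogonal basis (n_i)_{i∈ι} and a ν_{N′}-orthogonal basis (n′_j)_{j∈ι′}, where ι and ι′ are finite nonempty index types. Let e_{ij} : N → N′ be the Q-linear map with e_{ij}(n_k) = δ_{ik}·n′_j. Then the family (e_{ij})_{(i,j)∈ι×ι′} is a ν_{N,N′}-orthogonal basis of Hom_Q(N, N′): for all coefficients q_{ij} ∈ Q, ν_{N,N′}(∑_{i,j} q_{ij}·e_{ij}) = min_{i,j} (ν_Q(q_{ij}) + ν_{N,N′}(e_{ij})). -/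
open scoped BigOperators

/-- A valuation on a commutative ring, valued in `ℝ ∪ {∞}`
(modeled as `EReal` while avoiding the value `⊥ = −∞`). -/
structure IsRingValuation {Q : Type*} [CommRing Q] (ν : Q → EReal) : Prop where
  ne_bot : ∀ q, ν q ≠ ⊥
  top_iff : ∀ q, ν q = ⊤ ↔ q = 0
  min_le_add : ∀ q₁ q₂, min (ν q₁) (ν q₂) ≤ ν (q₁ + q₂)
  map_mul : ∀ q₁ q₂, ν (q₁ * q₂) = ν q₁ + ν q₂

/-- A valued module over a valued ring. -/
structure IsValuedModule {Q M : Type*} [CommRing Q] [AddCommGroup M] [Module Q M]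
    (νQ : Q → EReal) (ν : M → EReal) : Prop where
  ne_bot : ∀ m, ν m ≠ ⊥
  top_iff : ∀ m, ν m = ⊤ ↔ m = 0
  min_le_add : ∀ m₁ m₂, min (ν m₁) (ν m₂) ≤ ν (m₁ + m₂)
  map_smul : ∀ (q : Q) (m : M), ν (q • m) = νQ q + ν m

/-- The operator valuation of a `Q`-linear map between valued modules:
`ν_{N,N′}(Φ) = inf { ν_{N′}(Φ n) − ν_N(n) : n ≠ 0 }`, infimum in the extended reals. -/
noncomputable def opVal {Q N N' : Type*} [CommRing Q] [AddCommGroup N] [Module Q N]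
    [AddCommGroup N'] [Module Q N'] (νN : N → EReal) (νN' : N' → EReal)
    (Φ : N →ₗ[Q] N') : EReal :=
  ⨅ n : {n : N // n ≠ 0}, (νN' (Φ n.1) - νN n.1)

/-! Write a map `Φ` with `Φ (n_k) = ∑_j c_{kj} n′_j` in coordinates `n = ∑_i x_i n_i`. Testing `Φ` on
the basis vectors gives `ν(Φ) ≤ ν(c_{ij}) + ν(n′_j) − ν(n_i)`; conversely, by the ultrametric
inequality in `N′` and orthogonality in `N`,
`ν(Φ n) ≥ min_{i,j} (ν(x_i) + ν(c_{ij}) + ν(n′_j)) ≥ ν(n) + min_{i,j} (ν(c_{ij}) + ν(n′_j) − ν(n_i))`.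
So `ν(Φ) = min_{i,j} (ν(c_{ij}) + ν(n′_j) − ν(n_i))`. For `e_{ij}` this minimum is `ν(n′_j) − ν(n_i)`,
and for `∑ q_{ij} e_{ij}` it is the claimed one. -/

open Finset

namespace IsRingValuation

variable {Q : Type*} [CommRing Q] {ν : Q → EReal}

lemma map_zero (h : IsRingValuation ν) : ν 0 = ⊤ :=
  (h.top_iff 0).2 rfl

lemma map_one [Nontrivial Q] (h : IsRingValuation ν) : ν 1 = 0 := by
  obtain ⟨r, hr⟩ : ∃ r : ℝ, (r : EReal) = ν 1 :=
    ⟨_, EReal.coe_toReal (fun ht => one_ne_zero ((h.top_iff 1).1 ht)) (h.ne_bot 1)⟩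
  have hrr : ((r + r : ℝ) : EReal) = r := by rw [EReal.coe_add, hr, ← h.map_mul, one_mul]
  rw [← hr, EReal.coe_eq_zero]
  linarith [EReal.coe_eq_coe_iff.1 hrr]

end IsRingValuation

namespace IsValuedModule

variable {Q M : Type*} [CommRing Q] [AddCommGroup M] [Module Q M] {νQ : Q → EReal} {ν : M → EReal}

lemma map_zero (h : IsValuedModule νQ ν) : ν 0 = ⊤ :=
  (h.top_iff 0).2 rfl

lemma ne_top_of_ne_zero (h : IsValuedModule νQ ν) {m : M} (hm : m ≠ 0) : ν m ≠ ⊤ :=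
  fun ht => hm ((h.top_iff m).1 ht)

lemma coe_toReal (h : IsValuedModule νQ ν) {m : M} (hm : m ≠ 0) : ((ν m).toReal : EReal) = ν m :=
  EReal.coe_toReal (h.ne_top_of_ne_zero hm) (h.ne_bot m)

lemma le_map_sum (h : IsValuedModule νQ ν) {ι : Type*} (s : Finset ι) (f : ι → M) {c : EReal}
    (hc : ∀ i ∈ s, c ≤ ν (f i)) : c ≤ ν (∑ i ∈ s, f i) := by
  classical
  induction s using Finset.induction with
  | empty => simp only [sum_empty, h.map_zero, le_top]
  | insert a s ha ih =>
    rw [sum_insert ha]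
    exact (le_min (hc a (mem_insert_self a s))
      (ih fun i hi => hc i (mem_insert_of_mem hi))).trans (h.min_le_add _ _)

end IsValuedModule

def IsOrthogonalBasis {Q M ι : Type*} [CommRing Q] [AddCommGroup M] [Module Q M] [Fintype ι]
    (νQ : Q → EReal) (ν : M → EReal) (b : Module.Basis ι Q M) : Prop :=
  ∀ q : ι → Q, ν (∑ i, q i • b i) = ⨅ i, (νQ (q i) + ν (b i))

lemma IsOrthogonalBasis.apply_eq_iInf_repr {Q M ι : Type*} [CommRing Q] [AddCommGroup M]
    [Module Q M] [Fintype ι] {νQ : Q → EReal} {ν : M → EReal} {b : Module.Basis ι Q M}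
    (h : IsOrthogonalBasis νQ ν b) (m : M) : ν m = ⨅ i, (νQ (b.repr m i) + ν (b i)) := by
  simpa only [b.sum_repr] using h (b.repr m)

section OperatorValuation

variable {Q N N' ι ι' : Type*} [CommRing Q] [AddCommGroup N] [Module Q N]
  [AddCommGroup N'] [Module Q N'] [Fintype ι']
  {νQ : Q → EReal} {νN : N → EReal} {νN' : N' → EReal}
  {bN : Module.Basis ι Q N} {bN' : Module.Basis ι' Q N'} {c : ι → ι' → Q} {Φ : N →ₗ[Q] N'}

lemma apply_eq_sum_of_apply_basis [Fintype ι] (hΦ : ∀ k, Φ (bN k) = ∑ j, c k j • bN' j) (n : N) :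
    Φ n = ∑ j, (∑ i, bN.repr n i * c i j) • bN' j := by
  conv_lhs => rw [← bN.sum_repr n]
  simp_rw [map_sum, map_smul, hΦ, smul_sum, smul_smul, sum_smul]
  exact sum_comm

lemma opVal_le_of_apply_basis [Nontrivial Q] (horthN' : IsOrthogonalBasis νQ νN' bN')
    (hΦ : ∀ k, Φ (bN k) = ∑ j, c k j • bN' j) :
    opVal νN νN' Φ ≤ ⨅ p : ι × ι', (νQ (c p.1 p.2) + (νN' (bN' p.2) - νN (bN p.1))) := by
  refine le_iInf fun ⟨i, j⟩ => ?_
  calc opVal νN νN' Φ ≤ νN' (Φ (bN i)) - νN (bN i) :=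
        iInf_le (fun n : {n : N // n ≠ 0} => νN' (Φ n) - νN n) ⟨bN i, bN.ne_zero i⟩
    _ = (⨅ j, (νQ (c i j) + νN' (bN' j))) - νN (bN i) := by rw [hΦ, horthN']
    _ ≤ νQ (c i j) + νN' (bN' j) - νN (bN i) := EReal.sub_le_sub (iInf_le _ j) le_rfl
    _ = νQ (c i j) + (νN' (bN' j) - νN (bN i)) := add_sub_assoc _ _ _

lemma le_opVal_of_apply_basis [Fintype ι] [Nontrivial Q] (hQ : IsRingValuation νQ)
    (hN : IsValuedModule νQ νN) (hN' : IsValuedModule νQ νN')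
    (horthN : IsOrthogonalBasis νQ νN bN) (hΦ : ∀ k, Φ (bN k) = ∑ j, c k j • bN' j) :
    ⨅ p : ι × ι', (νQ (c p.1 p.2) + (νN' (bN' p.2) - νN (bN p.1))) ≤ opVal νN νN' Φ := by
  set m := ⨅ p : ι × ι', (νQ (c p.1 p.2) + (νN' (bN' p.2) - νN (bN p.1)))
  refine le_iInf fun ⟨n, hn⟩ => ?_
  rw [EReal.le_sub_iff_add_le (.inl (hN.ne_bot n)) (.inl (hN.ne_top_of_ne_zero hn)),
    apply_eq_sum_of_apply_basis hΦ]
  simp_rw [sum_smul]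
  refine hN'.le_map_sum _ _ fun j _ => hN'.le_map_sum _ _ fun i _ => ?_
  obtain ⟨a, ha⟩ : ∃ a : ℝ, (a : EReal) = νN (bN i) := ⟨_, hN.coe_toReal (bN.ne_zero i)⟩
  have hnorm : νN n ≤ νQ (bN.repr n i) + a := by
    rw [ha, horthN.apply_eq_iInf_repr n]
    exact iInf_le (fun i => νQ (bN.repr n i) + νN (bN i)) i
  calc m + νN n ≤ νQ (c i j) + (νN' (bN' j) - a) + (νQ (bN.repr n i) + a) :=
        add_le_add (ha ▸ iInf_le (fun p : ι × ι' => _) (i, j)) hnorm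
    _ = νQ (bN.repr n i) + νQ (c i j) + νN' (bN' j) := by
        rw [add_add_add_comm, EReal.sub_add_cancel, add_comm (νQ (c i j))]
    _ = νN' ((bN.repr n i * c i j) • bN' j) := by rw [hN'.map_smul, hQ.map_mul]

lemma opVal_eq_iInf_of_apply_basis [Fintype ι] [Nontrivial Q] (hQ : IsRingValuation νQ)
    (hN : IsValuedModule νQ νN) (hN' : IsValuedModule νQ νN')
    (horthN : IsOrthogonalBasis νQ νN bN) (horthN' : IsOrthogonalBasis νQ νN' bN')
    (hΦ : ∀ k, Φ (bN k) = ∑ j, c k j • bN' j) :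
    opVal νN νN' Φ = ⨅ p : ι × ι', (νQ (c p.1 p.2) + (νN' (bN' p.2) - νN (bN p.1))) :=
  (opVal_le_of_apply_basis horthN' hΦ).antisymm (le_opVal_of_apply_basis hQ hN hN' horthN hΦ)

lemma opVal_eq_sub_of_apply_basis_eq_ite [Fintype ι] [DecidableEq ι] [Nontrivial Q]
    (hQ : IsRingValuation νQ) (hN : IsValuedModule νQ νN) (hN' : IsValuedModule νQ νN')
    (horthN : IsOrthogonalBasis νQ νN bN) (horthN' : IsOrthogonalBasis νQ νN' bN') {i : ι} {j : ι'}
    (hΦ : ∀ k, Φ (bN k) = if k = i then bN' j else 0) :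
    opVal νN νN' Φ = νN' (bN' j) - νN (bN i) := by
  classical
  have hc : ∀ k, Φ (bN k) = ∑ l, (if k = i ∧ l = j then (1 : Q) else 0) • bN' l := by
    intro k
    by_cases hk : k = i <;> simp [hΦ, hk]
  rw [opVal_eq_iInf_of_apply_basis hQ hN hN' horthN horthN' hc]
  refine le_antisymm ((iInf_le _ (i, j)).trans_eq (by simp [hQ.map_one])) (le_iInf fun ⟨k, l⟩ => ?_)
  by_cases hkl : k = i ∧ l = j
  · obtain ⟨rfl, rfl⟩ := hkl
    simp [hQ.map_one]
  · rw [if_neg hkl, hQ.map_zero, ← hN'.coe_toReal (bN'.ne_zero l), ← hN.coe_toReal (bN.ne_zero k),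
      ← EReal.coe_sub, EReal.top_add_coe]
    exact le_top

end OperatorValuation

theorem elementary_orthogonal_basis_general {Q N N' : Type*} [CommRing Q] [Nontrivial Q]
    [AddCommGroup N] [Module Q N] [AddCommGroup N'] [Module Q N']
    {ι ι' : Type*} [Fintype ι] [DecidableEq ι]
    [Fintype ι']
    (νQ : Q → EReal) (νN : N → EReal) (νN' : N' → EReal)
    (hQ : IsRingValuation νQ)
    (hN : IsValuedModule νQ νN) (hN' : IsValuedModule νQ νN')
    (bN : Module.Basis ι Q N) (bN' : Module.Basis ι' Q N')
    (horthN : ∀ q : ι → Q, νN (∑ i, q i • bN i) = ⨅ i, (νQ (q i) + νN (bN i)))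
    (horthN' : ∀ q : ι' → Q, νN' (∑ j, q j • bN' j) = ⨅ j, (νQ (q j) + νN' (bN' j)))
    (e : ι → ι' → (N →ₗ[Q] N'))
    (he : ∀ i j k, e i j (bN k) = if k = i then bN' j else 0) :
    ∀ q : ι → ι' → Q,
      opVal νN νN' (∑ i, ∑ j, q i j • e i j) =
        ⨅ p : ι × ι', (νQ (q p.1 p.2) + opVal νN νN' (e p.1 p.2)) := by
  intro q
  have hsum : ∀ k, (∑ i, ∑ j, q i j • e i j) (bN k) = ∑ j, q k j • bN' j := by
    intro k
    simp [he, sum_comm (γ := ι)]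
  rw [opVal_eq_iInf_of_apply_basis hQ hN hN' horthN horthN' hsum]
  congr! with ⟨i, j⟩
  rw [opVal_eq_sub_of_apply_basis_eq_ite hQ hN hN' horthN horthN' (he i j)]

/-- For `ν`-orthogonal bases `(n_i)` of `N` and `(n′_j)` of `N′`, the
elementary maps `e_{ij}` (with `e_{ij}(n_k) = δ_{ik}·n′_j`) form a `ν_{N,N′}`-orthogonal
basis of `Hom_Q(N, N′)`:
`ν_{N,N′}(∑_{i,j} q_{ij}·e_{ij}) = min_{i,j} (ν_Q(q_{ij}) + ν_{N,N′}(e_{ij}))`. -/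
theorem elementary_orthogonal_basis {Q N N' : Type*} [CommRing Q] [Nontrivial Q]
    [AddCommGroup N] [Module Q N] [AddCommGroup N'] [Module Q N']
    {ι ι' : Type*} [Fintype ι] [Nonempty ι] [DecidableEq ι]
    [Fintype ι'] [Nonempty ι']
    (νQ : Q → EReal) (νN : N → EReal) (νN' : N' → EReal)
    (hQ : IsRingValuation νQ)
    (hN : IsValuedModule νQ νN) (hN' : IsValuedModule νQ νN')
    (bN : Module.Basis ι Q N) (bN' : Module.Basis ι' Q N')
    (horthN : ∀ q : ι → Q, νN (∑ i, q i • bN i) = ⨅ i, (νQ (q i) + νN (bN i)))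
    (horthN' : ∀ q : ι' → Q, νN' (∑ j, q j • bN' j) = ⨅ j, (νQ (q j) + νN' (bN' j)))
    (e : ι → ι' → (N →ₗ[Q] N'))
    (he : ∀ i j k, e i j (bN k) = if k = i then bN' j else 0) :
    ∀ q : ι → ι' → Q,
      opVal νN νN' (∑ i, ∑ j, q i j • e i j) =
        ⨅ p : ι × ι', (νQ (q p.1 p.2) + opVal νN νN' (e p.1 p.2)) :=
  elementary_orthogonal_basis_general νQ νN νN' hQ hN hN' bN bN' horthN horthN' e he
end

section
/- Let K be a field, F a field extension of K, and A a K-algebra equipped with a ℤ/2-grading A = A₀ ⊕ A₁ (A₀, A₁ are K-submodules with A_i·A_j ⊆ A_{i+j} and 1 ∈ A₀), and endow the F-algebra F ⊗_K A with the induced grading (F ⊗_K A₀) ⊕ (F ⊗_K A₁). Suppose that F ⊗_K A is a central simple graded algebra over F, i.e.: (i) every homogeneous element x of F ⊗_K A that supercommutes with all homogeneous elements (x·y = (−1)^{|x||y|} y·x for all homogeneous y) lies in F·1; and (ii) the only two-sided ideals I of F ⊗_K A that are graded (I equals the sum of its intersections with the two graded components) are the zero ideal and the whole algebra. Then A is a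 central simple graded algebra over K: every homogeneous a ∈ A supercommuting with all homogeneous elements of A lies in K·1, and the only graded two-sided ideals of A are 0 and A. -/
/-!
Over a field `K` every nontrivial `K`-algebra `F` is faithfully flat, so `p ↦ F ⊗ p` is an order
embedding of `K`-submodules of `A` into `F`-submodules of `F ⊗ A`. A homogeneous supercentral `x`
gives the homogeneous supercentral `1 ⊗ x ∈ F·1 = F ⊗ K·1`, hence `x ∈ K·1`. A graded two-sided
ideal `I` gives the graded two-sided ideal `F ⊗ I`, which is `0` or `F ⊗ A`, hence `I` is `0` or `A`.
-/

open TensorProduct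

/-- A ℤ/2-graded algebra `B` over a field `k` (graded pieces `𝒜 : ZMod 2 → Submodule k B`)
is a *central simple graded algebra* if every homogeneous supercentral element lies in
`k·1` and the only graded two-sided ideals of `B` are `⊥` and `⊤`. -/
def IsCSGA (k : Type*) [Field k] (B : Type*) [Ring B] [Algebra k B]
    (𝒜 : ZMod 2 → Submodule k B) : Prop :=
  (∀ (i : ZMod 2) (x : B), x ∈ 𝒜 i →
      (∀ (j : ZMod 2) (y : B), y ∈ 𝒜 j →
        x * y = ((-1 : ℤ) ^ (i.val * j.val)) • (y * x)) →
      ∃ c : k, x = algebraMap k B c) ∧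
  (∀ I : TwoSidedIdeal B,
      (∀ x ∈ I, ∃ y ∈ I, ∃ z ∈ I, y ∈ 𝒜 0 ∧ z ∈ 𝒜 1 ∧ x = y + z) →
      I = ⊥ ∨ I = ⊤)

namespace Submodule

variable {R M : Type*} (A : Type*) [CommRing R] [AddCommGroup M] [Module R M]

theorem baseChange_sup [Semiring A] [Algebra R A] (p q : Submodule R M) :
    (p ⊔ q).baseChange A = p.baseChange A ⊔ q.baseChange A := by
  conv_lhs => rw [← span_eq p, ← span_eq q, ← span_union]
  rw [baseChange_span, Set.image_union, span_union, ← baseChange_span, ← baseChange_span,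
    span_eq, span_eq]

variable {A}

theorem baseChange_le_inf_sup_inf [Semiring A] [Algebra R A] {p q r : Submodule R M}
    (h : p ≤ p ⊓ q ⊔ p ⊓ r) :
    p.baseChange A ≤ p.baseChange A ⊓ q.baseChange A ⊔ p.baseChange A ⊓ r.baseChange A :=
  calc p.baseChange A ≤ (p ⊓ q ⊔ p ⊓ r).baseChange A := baseChange_mono A h
    _ = (p ⊓ q).baseChange A ⊔ (p ⊓ r).baseChange A := baseChange_sup A _ _
    _ ≤ _ := sup_le_sup
        (le_inf (baseChange_mono A inf_le_left) (baseChange_mono A inf_le_right))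
        (le_inf (baseChange_mono A inf_le_left) (baseChange_mono A inf_le_right))

theorem mem_of_one_tmul_mem_baseChange [Ring A] [Algebra R A] [Module.FaithfullyFlat R A]
    {p : Submodule R M} {m : M} (h : (1 : A) ⊗ₜ[R] m ∈ p.baseChange A) : m ∈ p := by
  rw [← span_singleton_le_iff_mem, ← baseChange_le_iff (A := A), baseChange_span,
    Set.image_singleton, span_le, Set.singleton_subset_iff]
  exact h

end Submodule

section BaseChange

variable {K F A : Type*} [CommRing K] [CommRing F] [Algebra K F] [Ring A] [Algebra K A]

theorem Submodule.one_tmul_mul_eq_zsmul_of_mem_baseChange {p : Submodule K A} {x : A} {n : ℤ}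
    (h : ∀ y ∈ p, x * y = n • (y * x)) {t : F ⊗[K] A} (ht : t ∈ p.baseChange F) :
    (1 ⊗ₜ x) * t = n • (t * (1 ⊗ₜ x)) := by
  let u : F ⊗[K] A := 1 ⊗ₜ x
  suffices p.baseChange F ≤ LinearMap.ker (LinearMap.mulLeft F u - n • LinearMap.mulRight F u) by
    simpa [sub_eq_zero] using this ht
  rw [baseChange_eq_span, span_le]
  rintro _ ⟨y, hy, rfl⟩
  have : (1 : F) ⊗ₜ[K] (n • (y * x)) = n • (1 ⊗ₜ[K] (y * x)) := tmul_smul _ _ _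
  simpa [u, Algebra.TensorProduct.tmul_mul_tmul, h y hy, sub_eq_zero] using this

theorem Algebra.TensorProduct.exists_algebraMap_eq_of_one_tmul_eq [Module.FaithfullyFlat K F]
    {x : A} {c : F} (h : (1 : F) ⊗ₜ[K] x = algebraMap F (F ⊗[K] A) c) :
    ∃ k : K, x = algebraMap K A k := by
  have : x ∈ LinearMap.range (Algebra.linearMap K A) := by
    refine Submodule.mem_of_one_tmul_mem_baseChange (A := F) ?_
    rw [h]
    exact Submodule.tmul_mem_baseChange_of_mem c ⟨1, by simp⟩
  obtain ⟨k, hk⟩ := this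
  exact ⟨k, hk.symm⟩

end BaseChange

namespace TwoSidedIdeal

variable (K : Type*) {A : Type*} [CommRing K] [Ring A] [Algebra K A]

def restrictScalars (I : TwoSidedIdeal A) : Submodule K A :=
  I.asIdeal.restrictScalars K

variable {K}

@[simp]
theorem mem_restrictScalars {I : TwoSidedIdeal A} {x : A} : x ∈ I.restrictScalars K ↔ x ∈ I :=
  mem_asIdeal

theorem restrictScalars_le_restrictScalars_iff {I J : TwoSidedIdeal A} :
    I.restrictScalars K ≤ J.restrictScalars K ↔ I ≤ J := by
  simp only [SetLike.le_def, mem_restrictScalars]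

variable (F : Type*) [CommRing F] [Algebra K F]

theorem mul_mem_baseChange_restrictScalars (I : TwoSidedIdeal A) (t : F ⊗[K] A) {u : F ⊗[K] A}
    (hu : u ∈ (I.restrictScalars K).baseChange F) :
    t * u ∈ (I.restrictScalars K).baseChange F ∧ u * t ∈ (I.restrictScalars K).baseChange F := by
  set N := (I.restrictScalars K).baseChange F
  induction t using TensorProduct.induction_on with
  | zero => simp
  | add t₁ t₂ h₁ h₂ =>
    simpa only [add_mul, mul_add] using ⟨N.add_mem h₁.1 h₂.1, N.add_mem h₁.2 h₂.2⟩
  | tmul f a =>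
    suffices N ≤ N.comap (LinearMap.mulLeft F (f ⊗ₜ a)) ⊓ N.comap (LinearMap.mulRight F (f ⊗ₜ a))
      from this hu
    refine (Submodule.baseChange_eq_span F _).trans_le (Submodule.span_le.2 ?_)
    rintro _ ⟨m, hm, rfl⟩
    rw [SetLike.mem_coe, mem_restrictScalars] at hm
    simp only [TensorProduct.mk_apply, SetLike.mem_coe, Submodule.mem_inf, Submodule.mem_comap,
      LinearMap.mulLeft_apply, LinearMap.mulRight_apply, Algebra.TensorProduct.tmul_mul_tmul,
      mul_one, one_mul]
    exact ⟨Submodule.tmul_mem_baseChange_of_mem f (mem_restrictScalars.2 (I.mul_mem_left a m hm)),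
      Submodule.tmul_mem_baseChange_of_mem f (mem_restrictScalars.2 (I.mul_mem_right m a hm))⟩

variable (K) in
def baseChange (I : TwoSidedIdeal A) : TwoSidedIdeal (F ⊗[K] A) :=
  .mk' ((I.restrictScalars K).baseChange F) (Submodule.zero_mem _) (Submodule.add_mem _)
    (Submodule.neg_mem _)
    (fun hu => (mul_mem_baseChange_restrictScalars F I _ hu).1)
    (fun hu => (mul_mem_baseChange_restrictScalars F I _ hu).2)

variable {F}

theorem mem_baseChange {I : TwoSidedIdeal A} {t : F ⊗[K] A} :
    t ∈ I.baseChange K F ↔ t ∈ (I.restrictScalars K).baseChange F :=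
  mem_mk' _ _ _ _ _ _ _

theorem baseChange_le_baseChange_iff [Module.FaithfullyFlat K F] {I J : TwoSidedIdeal A} :
    I.baseChange K F ≤ J.baseChange K F ↔ I ≤ J := by
  rw [← restrictScalars_le_restrictScalars_iff (K := K) (I := I),
    ← Submodule.baseChange_le_iff (A := F)]
  simp only [SetLike.le_def, mem_baseChange]

theorem exists_add_mem_baseChange {I : TwoSidedIdeal A} {q r : Submodule K A}
    (h : ∀ x ∈ I, ∃ y ∈ I, ∃ z ∈ I, y ∈ q ∧ z ∈ r ∧ x = y + z) :
    ∀ t ∈ I.baseChange K F, ∃ u ∈ I.baseChange K F, ∃ v ∈ I.baseChange K F,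
      u ∈ q.baseChange F ∧ v ∈ r.baseChange F ∧ t = u + v := by
  have hI : I.restrictScalars K ≤ I.restrictScalars K ⊓ q ⊔ I.restrictScalars K ⊓ r := by
    intro x hx
    obtain ⟨y, hyI, z, hzI, hyq, hzr, rfl⟩ := h x (mem_restrictScalars.1 hx)
    exact Submodule.add_mem_sup ⟨mem_restrictScalars.2 hyI, hyq⟩ ⟨mem_restrictScalars.2 hzI, hzr⟩
  intro t ht
  obtain ⟨u, ⟨huI, huq⟩, v, ⟨hvI, hvr⟩, rfl⟩ :=
    Submodule.mem_sup.1 (Submodule.baseChange_le_inf_sup_inf hI (mem_baseChange.1 ht))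
  exact ⟨u, mem_baseChange.2 huI, v, mem_baseChange.2 hvI, huq, hvr, rfl⟩

end TwoSidedIdeal

theorem csga_of_baseChange_csga_general {K F A : Type*} [Field K] [Field F] [Algebra K F]
    [Ring A] [Algebra K A]
    (𝒜 : ZMod 2 → Submodule K A)
    (hF : IsCSGA F (F ⊗[K] A) (fun i => (𝒜 i).baseChange F)) :
    IsCSGA K A 𝒜 := by
  refine ⟨fun i x hx hx_super => ?_, fun I hI => ?_⟩
  · obtain ⟨c, hc⟩ := hF.1 i (1 ⊗ₜ x) (Submodule.tmul_mem_baseChange_of_mem 1 hx)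
      fun j _ ht => Submodule.one_tmul_mul_eq_zsmul_of_mem_baseChange (hx_super j) ht
    exact Algebra.TensorProduct.exists_algebraMap_eq_of_one_tmul_eq hc
  · rcases hF.2 (I.baseChange K F) (TwoSidedIdeal.exists_add_mem_baseChange hI) with h | h
    · left
      rw [← le_bot_iff, ← TwoSidedIdeal.baseChange_le_baseChange_iff (K := K) (F := F), h]
      exact bot_le
    · right
      rw [← top_le_iff, ← TwoSidedIdeal.baseChange_le_baseChange_iff (K := K) (F := F), h]
      exact le_top

/-- If `F ⊗_K A` with the induced ℤ/2-grading is a central simple graded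
algebra over the field extension `F`, then the ℤ/2-graded `K`-algebra `A` is a central
simple graded algebra over `K`. -/
theorem csga_of_baseChange_csga {K F A : Type*} [Field K] [Field F] [Algebra K F]
    [Ring A] [Algebra K A]
    (𝒜 : ZMod 2 → Submodule K A)
    (hdecomp : DirectSum.IsInternal 𝒜)
    (hone : (1 : A) ∈ 𝒜 0)
    (hmul : ∀ (i j : ZMod 2), ∀ x ∈ 𝒜 i, ∀ y ∈ 𝒜 j, x * y ∈ 𝒜 (i + j))
    (hF : IsCSGA F (F ⊗[K] A) (fun i => (𝒜 i).baseChange F)) :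
    IsCSGA K A 𝒜 :=
  csga_of_baseChange_csga_general 𝒜 hF
end

section
/- Let n ≥ 1, let u₁, …, uₙ be a ℤ-basis of ℤⁿ, and let v₁, …, vₙ ∈ ℤⁿ be primitive vectors such that ⟨u_i, v_j⟩ = 0 (standard bilinear pairing on ℤⁿ) whenever i ≠ j. Then v₁, …, vₙ form a ℤ-basis of ℤⁿ. -/
/-!
Let `w` be the basis of `ℤⁿ` dual to `u` under the dot product. A vector orthogonal to every
`u i` with `i ≠ j` has all its `w`-coordinates zero except the `j`-th, so
`v j = ⟨u j, v j⟩ • w j`. Primitivity forces `⟨u j, v j⟩ = ±1`, and rescaling a basis by units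
gives a basis.
-/

open Matrix

variable {ι R M : Type*} [CommRing R] [AddCommGroup M] [Module R M]

variable (R) in
def IsPrimitiveVector (x : M) : Prop :=
  x ≠ 0 ∧ ∀ (d : R) (y : M), x = d • y → IsUnit d

namespace Module.Basis

theorem eq_repr_smul_of_repr_eq_zero (b : Basis ι R M) {x : M} {j : ι}
    (h : ∀ i, i ≠ j → b.repr x i = 0) : x = b.repr x j • b j := by
  classical
  apply b.repr.injective
  ext i
  by_cases hij : i = j
  · subst hij
    simp
  · simp [h i hij, Ne.symm hij]

theorem exists_basis_coe_eq_of_eq_smul (b : Basis ι R M) {v : ι → M}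
    (hv : ∀ j, IsPrimitiveVector R (v j)) {c : ι → R} (hc : ∀ j, v j = c j • b j) :
    ∃ b' : Basis ι R M, ⇑b' = v := by
  have hunit : ∀ j, IsUnit (c j) := fun j => (hv j).2 (c j) (b j) (hc j)
  refine ⟨b.unitsSMul fun j => (hunit j).unit, funext fun j => ?_⟩
  rw [unitsSMul_apply, Units.smul_def, IsUnit.unit_spec, hc j]

variable [Fintype ι] [DecidableEq ι]

noncomputable def dotProductDual (u : Basis ι R (ι → R)) : Basis ι R (ι → R) :=
  u.dualBasis.map (dotProductEquiv R ι).symm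

@[simp]
theorem dotProductDual_repr_apply (u : Basis ι R (ι → R)) (x : ι → R) (i : ι) :
    u.dotProductDual.repr x i = u i ⬝ᵥ x := by
  simp [dotProductDual, dotProduct_comm]

theorem eq_smul_dotProductDual (u : Basis ι R (ι → R)) {x : ι → R} {j : ι}
    (h : ∀ i, i ≠ j → u i ⬝ᵥ x = 0) : x = (u j ⬝ᵥ x) • u.dotProductDual j := by
  have hrepr : ∀ i, i ≠ j → u.dotProductDual.repr x i = 0 := by
    simpa only [dotProductDual_repr_apply] using h
  simpa only [dotProductDual_repr_apply] using u.dotProductDual.eq_repr_smul_of_repr_eq_zero hrepr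

end Module.Basis

theorem primitive_orthogonal_basis_general (n : ℕ)
    (u : Module.Basis (Fin n) ℤ (Fin n → ℤ)) (v : Fin n → (Fin n → ℤ))
    (hprim : ∀ j, v j ≠ 0 ∧ ∀ (d : ℤ) (w : Fin n → ℤ), v j = d • w → IsUnit d)
    (horth : ∀ i j, i ≠ j → ∑ k, u i k * v j k = 0) :
    ∃ b : Module.Basis (Fin n) ℤ (Fin n → ℤ), ⇑b = v :=
  u.dotProductDual.exists_basis_coe_eq_of_eq_smul hprim fun j =>
    u.eq_smul_dotProductDual fun i hij => horth i j hij

/-- If `u₁, …, uₙ` is a `ℤ`-basis of `ℤⁿ` and `v₁, …, vₙ ∈ ℤⁿ` are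
primitive vectors with `⟨u_i, v_j⟩ = 0` (standard pairing) for all `i ≠ j`, then
`v₁, …, vₙ` form a `ℤ`-basis of `ℤⁿ`. -/
theorem primitive_orthogonal_basis (n : ℕ) (hn : 1 ≤ n)
    (u : Module.Basis (Fin n) ℤ (Fin n → ℤ)) (v : Fin n → (Fin n → ℤ))
    (hprim : ∀ j, v j ≠ 0 ∧ ∀ (d : ℤ) (w : Fin n → ℤ), v j = d • w → IsUnit d)
    (horth : ∀ i j, i ≠ j → ∑ k, u i k * v j k = 0) :
    ∃ b : Module.Basis (Fin n) ℤ (Fin n → ℤ), ⇑b = v :=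
  primitive_orthogonal_basis_general n u v hprim horth
end

section
/- Let n ≥ 1, let l₁, …, lₙ ≥ 1 be integers with L = ∑_j l_j, let m₁, …, mₙ be negative integers, and set E = n + ∑_j m_j − (n+1)·L. There exists a constant K ∈ ℂ such that for every τ ∈ ℂ with τ ≠ 0 and every ρ with 0 < ρ < |τ|, one has (2πi)^{−n} ∯_{|z_j|=ρ} (∏_{j=1}^{n} z_j^{m_j}) / (∏_{j=1}^{n} (z_j·∏_{k=1}^{n} z_k − τ^{n+1})^{l_j}) dz = K·τ^{E} (with τ^E the integer power, E possibly negative). That is, the residue at 0 of the form g_m(z) = (∏ z_j^{m_j} / ∏_j (z_j ∏_k z_k − T)^{l_j}) dz with T = τ^{n+1} is a fixed constant times T^{−L + (n + ∑ m_j)/(n+1)}. -/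
/-! The integrand `g_τ` is homogeneous, `g_{cτ}(c • z) = c ^ (E - n) * g_τ(z)`, so the
substitution `z = τ • w` (a rotation of every circle followed by a dilation) turns the torus
integral of radius `ρ` for `τ` into `τ ^ E` times the torus integral of radius `ρ / ‖τ‖` for
`τ = 1`. The latter does not depend on the radius: `g_1` is holomorphic on the punctured unit
polydisc, and Cauchy's theorem in one variable, applied to the circle integrals of Fubini's
formula, moves the radii one coordinate at a time. -/

open Complex MeasureTheory Set Metric

section

variable {E : Type*} [NormedAddCommGroup E] [NormedSpace ℂ E] {n : ℕ}

theorem Finset.prod_zpow_eq_zpow_sum₀ {ι G : Type*} [CommGroupWithZero G] (s : Finset ι)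
    (f : ι → ℤ) {a : G} (ha : a ≠ 0) : ∏ i ∈ s, a ^ f i = a ^ ∑ i ∈ s, f i := by
  induction s using Finset.cons_induction with
  | empty => simp
  | cons i s hi ih => rw [prod_cons, sum_cons, zpow_add₀ ha, ih]

theorem Fin.insertNth_mem_univ_pi {α : Type*} (i : Fin (n + 1)) (x : α) (y : Fin n → α)
    (s : Fin (n + 1) → Set α) :
    (i.insertNth x y : Fin (n + 1) → α) ∈ univ.pi s ↔ x ∈ s i ∧ y ∈ univ.pi (s ∘ i.succAbove) := by
  simp [i.forall_iff_succAbove]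

theorem Fin.differentiable_insertNth (i : Fin (n + 1)) (x : ℂ) :
    Differentiable ℂ (fun y : Fin n → ℂ => (i.insertNth x y : Fin (n + 1) → ℂ)) := by
  refine differentiable_pi.2 fun k => ?_
  cases k using i.succAboveCases <;> simp [differentiable_apply]

theorem Metric.sphere_subset_ball_sdiff_closedBall {X : Type*} [PseudoMetricSpace X] {c : X}
    {r₁ r₂ r : ℝ} (hr : r ∈ Ioo r₁ r₂) : sphere c r ⊆ ball c r₂ \ closedBall c r₁ :=
  fun _ hz => ⟨sphere_subset_ball hr.2 hz, fun h => (mem_sphere.1 hz ▸ hr.1).not_ge h⟩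

omit [NormedSpace ℂ E] in
theorem torusIntegrable_of_continuousOn {f : (Fin n → ℂ) → E} {c : Fin n → ℂ} {R : Fin n → ℝ}
    (hf : ContinuousOn f (univ.pi fun i => sphere (c i) |R i|)) : TorusIntegrable f c R :=
  (hf.comp_continuous (continuous_pi fun i => (continuous_circleMap (c i) (R i)).comp
    (continuous_apply i)) fun _ => mem_univ_pi.2 fun _ => circleMap_mem_sphere' _ _ _)
    |>.integrableOn_Icc

theorem circleIntegral_eq_of_differentiableOn_annulus {c : ℂ} {r₁ r₂ r r' : ℝ} (h₁ : 0 ≤ r₁)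
    {q : ℂ → E} (hq : DifferentiableOn ℂ q (ball c r₂ \ closedBall c r₁))
    (hr : r ∈ Ioo r₁ r₂) (hr' : r' ∈ Ioo r₁ r₂) :
    (∮ z in C(c, r), q z) = ∮ z in C(c, r'), q z := by
  wlog hle : r' ≤ r generalizing r r'
  · exact (this hr' hr (le_of_not_ge hle)).symm
  have hsub : closedBall c r \ ball c r' ⊆ ball c r₂ \ closedBall c r₁ :=
    sdiff_subset_sdiff (closedBall_subset_ball hr.2) (closedBall_subset_ball hr'.1)
  exact circleIntegral_eq_of_differentiable_on_annulus_off_countable (h₁.trans_lt hr'.1) hle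
    countable_empty (hq.mono hsub).continuousOn fun z hz =>
      hq.differentiableAt ((isOpen_ball.sdiff isClosed_closedBall).mem_nhds
        (hsub ⟨ball_subset_closedBall hz.1.1, fun h => hz.1.2 (ball_subset_closedBall h)⟩))

theorem torusIntegral_eq_of_differentiableOn_annulus {c : Fin n → ℂ} {r₁ r₂ : ℝ} (h₁ : 0 ≤ r₁)
    {f : (Fin n → ℂ) → E}
    (hf : DifferentiableOn ℂ f (univ.pi fun i => ball (c i) r₂ \ closedBall (c i) r₁))
    {R R' : Fin n → ℝ} (hR : ∀ i, R i ∈ Ioo r₁ r₂) (hR' : ∀ i, R' i ∈ Ioo r₁ r₂) :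
    (∯ z in T(c, R), f z) = ∯ z in T(c, R'), f z := by
  induction n with
  | zero => rw [Subsingleton.elim R R']
  | succ n ih =>
    have hint : ∀ {R : Fin (n + 1) → ℝ}, (∀ i, R i ∈ Ioo r₁ r₂) → TorusIntegrable f c R :=
      fun hR => torusIntegrable_of_continuousOn <| hf.continuousOn.mono <| pi_mono fun i _ => by
        rw [abs_of_pos (h₁.trans_lt (hR i).1)]
        exact sphere_subset_ball_sdiff_closedBall (hR i)
    -- Fixing coordinate `i` on its circle, the remaining radii move by induction.
    have hstep : ∀ i {R R' : Fin (n + 1) → ℝ}, (∀ i, R i ∈ Ioo r₁ r₂) → (∀ i, R' i ∈ Ioo r₁ r₂) →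
        R i = R' i → (∯ z in T(c, R), f z) = ∯ z in T(c, R'), f z := by
      intro i R R' hR hR' hi
      rw [torusIntegral_succAbove (hint hR) i, torusIntegral_succAbove (hint hR') i, hi]
      refine circleIntegral.integral_congr (h₁.trans (hR' i).1.le) fun x hx => ?_
      refine ih (hf.comp (Fin.differentiable_insertNth i x).differentiableOn fun y hy => ?_)
        (fun j => hR _) (fun j => hR' _)
      exact (Fin.insertNth_mem_univ_pi i x y _).2
        ⟨sphere_subset_ball_sdiff_closedBall (hR' i) hx, hy⟩
    rcases n with _ | n
    · rw [torusIntegral_dim1, torusIntegral_dim1]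
      refine circleIntegral_eq_of_differentiableOn_annulus h₁
        (hf.comp (differentiable_pi.2 fun _ => differentiable_id).differentiableOn fun w hw => ?_)
        (hR 0) (hR' 0)
      exact mem_univ_pi.2 fun i => Fin.fin_one_eq_zero i ▸ hw
    · -- First move all radii but the `0`-th, then all but the `1`-st.
      have hR'' : ∀ i, Function.update R' 0 (R 0) i ∈ Ioo r₁ r₂ := by
        intro i
        rcases eq_or_ne i 0 with rfl | hi
        · simpa using hR 0
        · simpa [hi] using hR' i
      exact (hstep 0 hR hR'' (by simp)).trans (hstep 1 hR'' hR' (by simp))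

theorem mul_circleMap_zero (c : ℂ) (r θ : ℝ) :
    c * circleMap 0 r θ = circleMap 0 (‖c‖ * r) (θ + c.arg) := by
  conv_lhs => rw [← norm_mul_exp_arg_mul_I c]
  simp only [circleMap_zero, ofReal_mul, ofReal_add, add_mul, Complex.exp_add]
  ring

theorem circleIntegral_comp_mul (q : ℂ → E) (c : ℂ) (r : ℝ) :
    (∮ z in C(0, r), c • q (c * z)) = ∮ z in C(0, ‖c‖ * r), q z := by
  have hp : Function.Periodic
      (fun θ => deriv (circleMap 0 (‖c‖ * r)) θ • q (circleMap 0 (‖c‖ * r) θ)) (2 * Real.pi) := by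
    intro θ
    simp only [deriv_circleMap, periodic_circleMap 0 _ θ]
  calc (∮ z in C(0, r), c • q (c * z))
      = ∫ θ in (0:ℝ)..2 * Real.pi, deriv (circleMap 0 (‖c‖ * r)) (θ + c.arg) •
          q (circleMap 0 (‖c‖ * r) (θ + c.arg)) := by
        refine intervalIntegral.integral_congr fun θ _ => ?_
        simp only [deriv_circleMap, ← mul_circleMap_zero, smul_smul]
        ring_nf
    _ = ∮ z in C(0, ‖c‖ * r), q z := by
        rw [intervalIntegral.integral_comp_add_right (fun θ => deriv (circleMap 0 (‖c‖ * r)) θ •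
          q (circleMap 0 (‖c‖ * r) θ)), zero_add, add_comm, hp.intervalIntegral_add_eq c.arg 0,
          zero_add]
        rfl

theorem torusIntegral_comp_smul (f : (Fin n → ℂ) → E) (c : ℂ) {R : Fin n → ℝ} (hR : 0 ≤ R)
    (hf : ContinuousOn f (univ.pi fun i => sphere 0 (‖c‖ * R i))) :
    (∯ z in T(0, R), c ^ n • f (c • z)) = ∯ z in T(0, ‖c‖ • R), f z := by
  induction n with
  | zero =>
    simp only [torusIntegral, pow_zero, one_smul]
    congr! 3 with θ
    exact congrArg f (Subsingleton.elim _ _)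
  | succ n ih =>
    have hsmul : MapsTo (c • ·) (univ.pi fun i => sphere (0 : ℂ) |R i|)
        (univ.pi fun i => sphere 0 (‖c‖ * R i)) := fun z hz => by
      simp only [mem_univ_pi, mem_sphere_zero_iff_norm, abs_of_nonneg (hR _)] at hz ⊢
      exact fun i => by rw [Pi.smul_apply, norm_smul, hz i]
    have hint : TorusIntegrable (fun z => c ^ (n + 1) • f (c • z)) 0 R :=
      torusIntegrable_of_continuousOn <|
        continuousOn_const.smul (hf.comp (continuous_const_smul c).continuousOn hsmul)
    have hint' : TorusIntegrable f 0 (‖c‖ • R) := torusIntegrable_of_continuousOn <| by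
      simpa [abs_of_nonneg (mul_nonneg (norm_nonneg c) (hR _))] using hf
    calc (∯ z in T(0, R), c ^ (n + 1) • f (c • z))
        = ∮ x in C(0, R 0), ∯ y in T(0, R ∘ Fin.succ), c ^ (n + 1) • f (c • Fin.cons x y) :=
          torusIntegral_succ hint
      _ = ∮ x in C(0, R 0), c • ∯ y in T(0, ‖c‖ • (R ∘ Fin.succ)), f (Fin.cons (c * x) y) := by
          refine circleIntegral.integral_congr (hR 0) fun x hx => ?_
          have hslice : ContinuousOn (fun y => f (Fin.cons (c * x) y))
              (univ.pi fun i => sphere 0 (‖c‖ * (R ∘ Fin.succ) i)) :=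
            hf.comp (continuous_const.finCons (A := fun _ => ℂ) continuous_id).continuousOn
              fun y hy => by
                simp only [mem_univ_pi, Fin.forall_fin_succ, Fin.cons_zero, Fin.cons_succ,
                  mem_sphere_zero_iff_norm, norm_mul] at hx hy ⊢
                exact ⟨by rw [hx], hy⟩
          rw [← ih _ (R := R ∘ Fin.succ) (fun i => hR _) hslice, ← torusIntegral_smul]
          simp only [pow_succ', mul_smul]
          congr! 4 with y
          exact congrArg f (Matrix.smul_cons c x y)
      _ = ∮ w in C(0, ‖c‖ * R 0), ∯ y in T(0, ‖c‖ • (R ∘ Fin.succ)), f (Fin.cons w y) :=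
          circleIntegral_comp_mul (fun w => ∯ y in T(0, ‖c‖ • (R ∘ Fin.succ)), f (Fin.cons w y))
            c (R 0)
      _ = ∯ z in T(0, ‖c‖ • R), f z := (torusIntegral_succ hint').symm

/-- The form `g_m` of the paper, with `T = τ ^ (n + 1)`. -/
noncomputable def residueIntegrand (l : Fin n → ℕ) (m : Fin n → ℤ) (τ : ℂ) (z : Fin n → ℂ) : ℂ :=
  (∏ j, z j ^ m j) / ∏ j, (z j * ∏ k, z k - τ ^ (n + 1)) ^ l j

theorem mul_prod_sub_pow_ne_zero {τ : ℂ} {z : Fin n → ℂ} (hz : ∀ k, ‖z k‖ < ‖τ‖) (j : Fin n) :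
    z j * ∏ k, z k - τ ^ (n + 1) ≠ 0 := by
  have hτ : 0 < ‖τ‖ := (norm_nonneg _).trans_lt (hz j)
  refine sub_ne_zero.2 fun h => (congrArg norm h).not_lt ?_
  calc ‖z j * ∏ k, z k‖ = ‖z j‖ * ∏ k, ‖z k‖ := by rw [norm_mul, norm_prod]
    _ < ‖τ‖ * ∏ _k : Fin n, ‖τ‖ := mul_lt_mul_of_lt_of_le_of_nonneg_of_pos (hz j)
          (Finset.prod_le_prod (fun k _ => norm_nonneg _) fun k _ => (hz k).le)
          (norm_nonneg _) (Finset.prod_pos fun _ _ => hτ)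
    _ = ‖τ ^ (n + 1)‖ := by simp [pow_succ']

theorem residueIntegrand_mul_smul (l : Fin n → ℕ) (m : Fin n → ℤ) (τ : ℂ) {c : ℂ} (hc : c ≠ 0)
    (z : Fin n → ℂ) :
    residueIntegrand l m (c * τ) (c • z) =
      c ^ (∑ j, m j - ((n : ℤ) + 1) * ∑ j, (l j : ℤ)) * residueIntegrand l m τ z := by
  have hfactor : ∀ j, c * z j * ∏ k, c * z k - (c * τ) ^ (n + 1) =
      c ^ (n + 1) * (z j * ∏ k, z k - τ ^ (n + 1)) := fun j => by
    rw [Finset.prod_mul_distrib, Finset.prod_const, Finset.card_univ, Fintype.card_fin]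
    ring
  have hdeg : ((n : ℤ) + 1) * ∑ j, (l j : ℤ) = (((n + 1) * ∑ j, l j : ℕ) : ℤ) := by push_cast; ring
  have hnum : ∏ j, (c • z) j ^ m j = c ^ (∑ j, m j) * ∏ j, z j ^ m j := by
    simp only [Pi.smul_apply, smul_eq_mul, mul_zpow, Finset.prod_mul_distrib,
      Finset.prod_zpow_eq_zpow_sum₀ _ _ hc]
  have hden : ∏ j, ((c • z) j * ∏ k, (c • z) k - (c * τ) ^ (n + 1)) ^ l j =
      c ^ ((n + 1) * ∑ j, l j) * ∏ j, (z j * ∏ k, z k - τ ^ (n + 1)) ^ l j := by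
    simp only [Pi.smul_apply, smul_eq_mul, hfactor]
    simp only [mul_pow, Finset.prod_mul_distrib, ← pow_mul, Finset.prod_pow_eq_pow_sum,
      ← Finset.mul_sum]
  rw [residueIntegrand, residueIntegrand, hnum, hden, zpow_sub₀ hc, hdeg, zpow_natCast,
    mul_div_mul_comm]

theorem differentiableAt_residueIntegrand (l : Fin n → ℕ) (m : Fin n → ℤ) {τ : ℂ}
    {z : Fin n → ℂ} (hz : ∀ k, z k ≠ 0) (hzτ : ∀ k, ‖z k‖ < ‖τ‖) :
    DifferentiableAt ℂ (residueIntegrand l m τ) z := by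
  have hden : ∏ j, (z j * ∏ k, z k - τ ^ (n + 1)) ^ l j ≠ 0 :=
    Finset.prod_ne_zero_iff.2 fun j _ => pow_ne_zero _ (mul_prod_sub_pow_ne_zero hzτ j)
  unfold residueIntegrand
  fun_prop (disch := first | exact .inl (hz _) | exact hden)

theorem torusIntegral_residueIntegrand (l : Fin n → ℕ) (m : Fin n → ℤ) {τ : ℂ} (hτ : τ ≠ 0)
    {ρ : ℝ} (hρ : 0 < ρ) (hρτ : ρ < ‖τ‖) :
    (∯ z in T(0, fun _ => ρ), residueIntegrand l m τ z) =
      τ ^ ((n : ℤ) + ∑ j, m j - ((n : ℤ) + 1) * ∑ j, (l j : ℤ)) *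
        ∯ z in T(0, fun _ => (2⁻¹ : ℝ)), residueIntegrand l m 1 z := by
  have hτ₀ : 0 < ‖τ‖ := norm_pos_iff.2 hτ
  set r := ρ / ‖τ‖
  have hr : r ∈ Ioo 0 1 := ⟨div_pos hρ hτ₀, (div_lt_one hτ₀).2 hρτ⟩
  have hcont : ContinuousOn (residueIntegrand l m τ) (univ.pi fun _ => sphere 0 (‖τ‖ * r)) := by
    intro z hz
    have hzρ : ∀ k, ‖z k‖ = ρ := fun k => by
      simpa [r, mul_div_cancel₀ _ hτ₀.ne'] using mem_univ_pi.1 hz k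
    refine (differentiableAt_residueIntegrand l m (fun k => ?_) fun k => ?_).continuousAt
      |>.continuousWithinAt
    · exact norm_pos_iff.1 (hzρ k ▸ hρ)
    · exact hzρ k ▸ hρτ
  have hdiff : DifferentiableOn ℂ (residueIntegrand l m 1)
      (univ.pi fun _ => ball (0 : ℂ) 1 \ closedBall 0 0) := by
    intro z hz
    refine (differentiableAt_residueIntegrand l m (fun k => ?_) fun k => ?_).differentiableWithinAt
    · simpa using (mem_univ_pi.1 hz k).2
    · simpa using (mem_univ_pi.1 hz k).1
  have hhom : ∀ z, τ ^ n • residueIntegrand l m τ (τ • z) =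
      τ ^ ((n : ℤ) + ∑ j, m j - ((n : ℤ) + 1) * ∑ j, (l j : ℤ)) * residueIntegrand l m 1 z := by
    intro z
    have h := residueIntegrand_mul_smul l m 1 hτ z
    rw [mul_one] at h
    rw [smul_eq_mul, h, ← mul_assoc, ← zpow_natCast, ← zpow_add₀ hτ, add_sub_assoc]
  calc (∯ z in T(0, fun _ => ρ), residueIntegrand l m τ z)
      = ∯ z in T(0, ‖τ‖ • fun _ => r), residueIntegrand l m τ z := by
        congr 1
        ext
        simp [r, mul_div_cancel₀ _ hτ₀.ne']
    _ = ∯ z in T(0, fun _ => r), τ ^ n • residueIntegrand l m τ (τ • z) :=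
        (torusIntegral_comp_smul _ τ (fun _ => hr.1.le) hcont).symm
    _ = _ := by
        simp only [hhom, torusIntegral_const_mul]
        rw [torusIntegral_eq_of_differentiableOn_annulus le_rfl hdiff (c := 0)
          (R' := fun _ => 2⁻¹) (fun _ => hr) fun _ => ⟨by norm_num, by norm_num⟩]

end

theorem residue_at_zero_power_general (n : ℕ)
    (l : Fin n → ℕ) (m : Fin n → ℤ) :
    ∃ K : ℂ, ∀ (τ : ℂ) (ρ : ℝ), τ ≠ 0 → 0 < ρ → ρ < ‖τ‖ →
      (2 * (Real.pi : ℂ) * Complex.I)⁻¹ ^ n *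
        (∯ z in T((0 : Fin n → ℂ), fun _ => ρ),
          (∏ j, z j ^ (m j)) /
            (∏ j, (z j * (∏ k, z k) - τ ^ (n + 1)) ^ (l j))) =
      K * τ ^ ((n : ℤ) + (∑ j, m j) - ((n : ℤ) + 1) * ∑ j, (l j : ℤ)) :=
  ⟨(2 * (Real.pi : ℂ) * Complex.I)⁻¹ ^ n *
      ∯ z in T(0, fun _ => (2⁻¹ : ℝ)), residueIntegrand l m 1 z, fun τ ρ hτ hρ hρτ => by
      change _ * (∯ z in T(0, fun _ => ρ), residueIntegrand l m τ z) = _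
      rw [torusIntegral_residueIntegrand l m hτ hρ hρτ]
      ring⟩

/-- (Lemma `lm:residue4` of the paper, as a torus integral.)
With `L = ∑ l_j`, `m_j < 0`, and `E = n + ∑ m_j − (n+1)L`, there is a constant `K ∈ ℂ`
such that for all `τ ≠ 0` and `0 < ρ < |τ|`,
`(2πi)^{−n} ∯_{|z_j|=ρ} ∏ z_j^{m_j} / ∏ (z_j ∏ z_k − τ^{n+1})^{l_j} dz = K·τ^E`,
i.e. the residue at `0` of `g_m` is a fixed constant times
`T^{−L+(n+∑m_j)/(n+1)}` with `T = τ^{n+1}`. -/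
theorem residue_at_zero_power (n : ℕ) (hn : 1 ≤ n)
    (l : Fin n → ℕ) (hl : ∀ j, 1 ≤ l j) (m : Fin n → ℤ) (hm : ∀ j, m j < 0) :
    ∃ K : ℂ, ∀ (τ : ℂ) (ρ : ℝ), τ ≠ 0 → 0 < ρ → ρ < ‖τ‖ →
      (2 * (Real.pi : ℂ) * Complex.I)⁻¹ ^ n *
        (∯ z in T((0 : Fin n → ℂ), fun _ => ρ),
          (∏ j, z j ^ (m j)) /
            (∏ j, (z j * (∏ k, z k) - τ ^ (n + 1)) ^ (l j))) =
      K * τ ^ ((n : ℤ) + (∑ j, m j) - ((n : ℤ) + 1) * ∑ j, (l j : ℤ)) :=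
  residue_at_zero_power_general n l m
end

section
/- Let n ≥ 1, let T ∈ ℂ, and let ρ > 0 with |T|·ρ^{n+1} < 1. Then (2πi)^{−n} ∯_{|z_j|=ρ} 1 / (∏_{j=1}^{n} z_j · ∏_{j=1}^{n} (1 − T·z_j·∏_{k=1}^{n} z_k)) dz = 1. -/
/-!
On the closed polydisc of radius `ρ` we have `|T z_j ∏_k z_k| ≤ |T| ρ^{n+1} < 1`, so
`f z = ∏_j (1 - T z_j ∏_k z_k)⁻¹` is holomorphic there and the integrand is `f z / ∏_j z_j`.
The Cauchy integral formula on a polydisc, obtained by applying the one-variable formula one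
coordinate at a time, evaluates the integral as `(2πi)^n f 0 = (2πi)^n`.
-/

open Complex MeasureTheory Metric Set
open scoped Real

theorem Fin.cons_mem_univ_pi_iff {n : ℕ} {α : Type*} {s : Fin (n + 1) → Set α} {x : α}
    {y : Fin n → α} : (Fin.cons x y : Fin (n + 1) → α) ∈ univ.pi s ↔
      x ∈ s 0 ∧ y ∈ univ.pi fun i => s i.succ := by
  simp [Fin.forall_fin_succ]

variable {n : ℕ} {E : Type*} [NormedAddCommGroup E]

theorem ContinuousOn.torusIntegrable {f : (Fin n → ℂ) → E} {c : Fin n → ℂ} {R : Fin n → ℝ}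
    (hR : ∀ i, 0 ≤ R i) (hf : ContinuousOn f (univ.pi fun i => sphere (c i) (R i))) :
    TorusIntegrable f c R := by
  refine (hf.comp_continuous (by unfold torusMap; fun_prop) fun θ => ?_).integrableOn_Icc
  simp [torusMap, abs_of_nonneg (hR _)]

theorem DifferentiableOn.torusIntegral_prod_sub_inv_smul [NormedSpace ℂ E] [CompleteSpace E]
    {c w : Fin n → ℂ} {R : Fin n → ℝ} {f : (Fin n → ℂ) → E}
    (hf : DifferentiableOn ℂ f (univ.pi fun i => closedBall (c i) (R i)))
    (hw : ∀ i, w i ∈ ball (c i) (R i)) :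
    (∯ z in T(c, R), (∏ i, (z i - w i))⁻¹ • f z) = (2 * π * I : ℂ) ^ n • f w := by
  induction n with
  | zero => simp [Subsingleton.elim c w]
  | succ n ih =>
    have hR : ∀ i, 0 ≤ R i := fun i => dist_nonneg.trans (hw i).le
    have hint : TorusIntegrable (fun z => (∏ i, (z i - w i))⁻¹ • f z) c R := by
      refine ContinuousOn.torusIntegrable hR (ContinuousOn.smul ?_ ?_)
      · refine (Continuous.continuousOn (by fun_prop)).inv₀ fun z hz => ?_
        refine Finset.prod_ne_zero_iff.2 fun i _ => sub_ne_zero.2 fun hzw => ?_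
        have hzi : z i ∈ sphere (c i) (R i) := hz i (mem_univ i)
        exact (mem_sphere.1 hzi ▸ mem_ball.1 (hzw ▸ hw i)).false
      · exact hf.continuousOn.mono (pi_mono fun i _ => sphere_subset_closedBall)
    have hslice : ∀ x ∈ sphere (c 0) (R 0),
        (∯ y in T(c ∘ Fin.succ, R ∘ Fin.succ),
            (∏ i, ((Fin.cons x y : Fin (n + 1) → ℂ) i - w i))⁻¹ • f (Fin.cons x y)) =
          (x - w 0)⁻¹ • (2 * π * I : ℂ) ^ n • f (Fin.cons x (Fin.tail w)) := by
      intro x hx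
      simp only [Fin.prod_univ_succ, Fin.cons_zero, Fin.cons_succ, mul_inv, mul_smul]
      rw [torusIntegral_smul]
      congr 1
      refine ih (hf.comp (by fun_prop) fun y hy => ?_) fun i => hw i.succ
      exact Fin.cons_mem_univ_pi_iff.2 ⟨sphere_subset_closedBall hx, hy⟩
    have hline : DifferentiableOn ℂ (fun x => (2 * π * I : ℂ) ^ n • f (Fin.cons x (Fin.tail w)))
        (closedBall (c 0) (R 0)) := by
      refine (hf.comp (by fun_prop) fun x hx => ?_).const_smul _
      exact Fin.cons_mem_univ_pi_iff.2 ⟨hx, fun i _ => ball_subset_closedBall (hw i.succ)⟩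
    rw [torusIntegral_succ hint, circleIntegral.integral_congr (hR 0) hslice,
      hline.circleIntegral_sub_inv_smul (hw 0), Fin.cons_self_tail, smul_smul, pow_succ']

theorem norm_mul_mul_prod_lt_one {T : ℂ} {ρ : ℝ} (h : ‖T‖ * ρ ^ (n + 1) < 1) {z : Fin n → ℂ}
    (hz : z ∈ univ.pi fun _ => closedBall 0 ρ) (j : Fin n) : ‖T * z j * ∏ k, z k‖ < 1 := by
  have hzk : ∀ k, ‖z k‖ ≤ ρ := fun k => mem_closedBall_zero_iff.1 (hz k (mem_univ k))
  have hρ : 0 ≤ ρ := (norm_nonneg _).trans (hzk j)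
  calc ‖T * z j * ∏ k, z k‖ = ‖T‖ * (‖z j‖ * ∏ k, ‖z k‖) := by
        rw [norm_mul, norm_mul, norm_prod, mul_assoc]
    _ ≤ ‖T‖ * (ρ * ∏ _k : Fin n, ρ) := by gcongr with k <;> exact hzk _
    _ = ‖T‖ * ρ ^ (n + 1) := by rw [Fin.prod_const, pow_succ']
    _ < 1 := h

theorem torus_integral_one_general (n : ℕ) (T : ℂ) (ρ : ℝ) (hρ : 0 < ρ)
    (h : ‖T‖ * ρ ^ (n + 1) < 1) :
    (2 * (Real.pi : ℂ) * Complex.I)⁻¹ ^ n *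
      (∯ z in T((0 : Fin n → ℂ), fun _ => ρ),
        1 / ((∏ j, z j) * ∏ j, (1 - T * z j * ∏ k, z k))) = 1 := by
  set f : (Fin n → ℂ) → ℂ := fun z => (∏ j, (1 - T * z j * ∏ k, z k))⁻¹
  have hf : DifferentiableOn ℂ f (univ.pi fun _ => closedBall 0 ρ) := by
    refine (Differentiable.differentiableOn (by fun_prop)).inv fun z hz =>
      Finset.prod_ne_zero_iff.2 fun j _ => sub_ne_zero.2 fun h1 => ?_
    simpa [← h1] using norm_mul_mul_prod_lt_one h hz j
  have hintegrand (z : Fin n → ℂ) : 1 / ((∏ j, z j) * ∏ j, (1 - T * z j * ∏ k, z k)) =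
      (∏ j, (z j - (0 : Fin n → ℂ) j))⁻¹ • f z := by
    simp only [f, Pi.zero_apply, sub_zero, smul_eq_mul, one_div, mul_inv]
  simp only [hintegrand]
  rw [hf.torusIntegral_prod_sub_inv_smul (c := 0) (w := 0) fun _ => mem_ball_self hρ, inv_pow,
    smul_eq_mul, inv_mul_cancel_left₀ (pow_ne_zero _ two_pi_I_ne_zero)]
  simp [f]

/-- (Analytic core of Lemma `lm:G_residues_x` of the paper.)
For `n ≥ 1`, `T ∈ ℂ` and `ρ > 0` with `|T|·ρ^{n+1} < 1`,
`(2πi)^{−n} ∯_{|z_j|=ρ} 1 / (∏ z_j · ∏ (1 − T z_j ∏ z_k)) dz = 1`. -/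
theorem torus_integral_one (n : ℕ) (hn : 1 ≤ n) (T : ℂ) (ρ : ℝ) (hρ : 0 < ρ)
    (h : ‖T‖ * ρ ^ (n + 1) < 1) :
    (2 * (Real.pi : ℂ) * Complex.I)⁻¹ ^ n *
      (∯ z in T((0 : Fin n → ℂ), fun _ => ρ),
        1 / ((∏ j, z j) * ∏ j, (1 - T * z j * ∏ k, z k))) = 1 :=
  torus_integral_one_general n T ρ hρ h
end

section
/- Let A be a commutative ring and let z, t, u, v ∈ A with z invertible and u·v = 1. Define the 2×2 matrices over A: D = [[0, z + t], [1 − t·z⁻¹, 0]] and b = [[0, (1 − u)·z], [1 − v, 0]]. Then: (i) D·D = (z − t²·z⁻¹)·I₂; and (ii) D·b + b·D − b·b = ((u − v)·t)·I₂. (Taking A = ℝ[[s]] ⊗ S₁ with u = e^s, v = e^{−s}, z = z₁, t = T^{1/2}, part (i) is the matrix factorization equation D₁² = W₁·id for W₁ = z₁ − T/z₁, and part (ii) is the Maurer–Cartan equation δ(b) − b² = c·id of Proposition prop:bounding cochain, with c = (e^s − e^{−s})·T^{1/2}, for the bounding cochain b = (e^{−s} − e^{s})(z₁/2T^{1/2})·e₀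 − (e^{−s} + e^{s} − 2)·e₁/2 of the Dirac matrix factorization mirror to ℝP¹ ⊂ ℂP¹, under the identification of End(M₁) with 2×2 matrices over S₁.) -/
open Matrix

/-- Let `A` be a commutative ring, `z, t, u, v ∈ A` with `z` invertible
(with inverse `zi`) and `u·v = 1`. For the `2×2` matrices
`D = [[0, z+t], [1 − t·z⁻¹, 0]]` and `b = [[0, (1−u)·z], [1−v, 0]]`:
(i) `D·D = (z − t²·z⁻¹)·I₂`, and (ii) `D·b + b·D − b·b = ((u−v)·t)·I₂`. -/
theorem dirac_mf_maurer_cartan {A : Type*} [CommRing A]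
    (z t u v zi : A) (hz : z * zi = 1) (huv : u * v = 1) :
    let D : Matrix (Fin 2) (Fin 2) A := !![0, z + t; 1 - t * zi, 0]
    let b : Matrix (Fin 2) (Fin 2) A := !![0, (1 - u) * z; 1 - v, 0]
    D * D = (z - t ^ 2 * zi) • (1 : Matrix (Fin 2) (Fin 2) A) ∧
    D * b + b * D - b * b = ((u - v) * t) • (1 : Matrix (Fin 2) (Fin 2) A) := by
  intro D b
  constructor <;>
  · ext i j
    fin_cases i <;> fin_cases j <;>
      simp [D, b, Matrix.mul_apply, Fin.sum_univ_two, Matrix.one_apply] <;>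
      first
        | linear_combination -t * hz
        | linear_combination t * (u - 1) * hz - z * huv
end

section
/- Let l ≥ 1 be an integer, let t, u, v ∈ ℂ, and let R > |t|. Then (1/(2πi)) ∮_{|z|=R} ((1 − u)^l·t^l·z^{l−1} − (1 − v)^l·z^{2l−1}) / (z² + t²)^l dz = −(1 − v)^l. -/
/-!
Put `a = -t²`, so that the integrand is a combination of `z ^ m / (z ^ 2 - a) ^ n` with
`m < 2n`. For even `m` this function is even, and its integral vanishes because `z ↦ -z` maps
the circle onto itself with the same orientation but negates `dz`. For odd `m = 2j + 1` the
substitution `w = z²` turns the integral into `∮_{|w|=R²} w ^ j / (w - a) ^ n dw`; expanding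
`w ^ j = ((w - a) + a) ^ j` binomially, only a `(w - a)⁻¹` term can contribute, and it occurs
exactly when `j = n - 1`. So the `z ^ (l - 1)` part integrates to `0` and the `z ^ (2l - 1)`
part to `2πi`.
-/

open Complex Metric Real intervalIntegral

theorem circleIntegrable_pow_div_sq_sub_pow (m n : ℕ) {a : ℂ} {R : ℝ} (ha : ‖a‖ < R ^ 2) :
    CircleIntegrable (fun z => z ^ m / (z ^ 2 - a) ^ n) 0 R := by
  refine ContinuousOn.circleIntegrable' <| (continuousOn_pow m).div (by fun_prop) fun z hz => ?_
  refine pow_ne_zero n (sub_ne_zero.mpr fun h => ha.ne ?_)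
  rw [← h, norm_pow, mem_sphere_zero_iff_norm.mp hz, sq_abs]

namespace circleIntegral

theorem integral_comp_neg (f : ℂ → ℂ) (R : ℝ) :
    (∮ z in C(0, R), f (-z)) = -∮ z in C(0, R), f z := by
  have hshift (θ : ℝ) : circleMap 0 R (θ + π) = -circleMap 0 R θ := by
    rw [← circleMap_neg_radius]; simp [circleMap]
  have hper : Function.Periodic
      (fun θ => deriv (circleMap 0 R) θ • f (circleMap 0 R θ)) (2 * π) :=
    fun θ => by simp only [periodic_circleMap 0 R θ, deriv_circleMap]
  calc (∮ z in C(0, R), f (-z))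
      = ∫ θ in 0..2 * π, -(deriv (circleMap 0 R) (θ + π) • f (circleMap 0 R (θ + π))) := by
        simp only [circleIntegral, deriv_circleMap, hshift, neg_neg, smul_eq_mul, neg_mul]
    _ = -∫ θ in π..π + 2 * π, deriv (circleMap 0 R) θ • f (circleMap 0 R θ) := by
        rw [integral_neg,
          integral_comp_add_right (fun θ => deriv (circleMap 0 R) θ • f (circleMap 0 R θ)),
          zero_add, add_comm (2 * π)]
    _ = -∮ z in C(0, R), f z := by
        rw [hper.intervalIntegral_add_eq π 0, zero_add]; rfl

theorem integral_eq_zero_of_even {f : ℂ → ℂ} (hf : Function.Even f) (R : ℝ) :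
    (∮ z in C(0, R), f z) = 0 := by
  have h := integral_comp_neg f R
  simp only [show ∀ z, f (-z) = f z from hf] at h
  exact self_eq_neg.mp h

theorem integral_pow_mul_comp_pow_succ {g : ℂ → ℂ} {R : ℝ} (n : ℕ)
    (hg : ContinuousOn g (sphere 0 |R ^ (n + 1)|)) :
    (∮ z in C(0, R), z ^ n * g (z ^ (n + 1))) = ∮ w in C(0, R ^ (n + 1)), g w := by
  set H : ℝ → ℂ := fun φ =>
    deriv (circleMap 0 (R ^ (n + 1))) φ • g (circleMap 0 (R ^ (n + 1)) φ)
  have hH : Continuous H := by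
    simp only [H, deriv_circleMap]
    exact ((continuous_circleMap 0 _).mul continuous_const).smul
      (hg.comp_continuous (continuous_circleMap 0 _) (circleMap_mem_sphere' 0 _))
  have hper : Function.Periodic H (2 * π) :=
    fun θ => by simp only [H, periodic_circleMap 0 _ θ, deriv_circleMap]
  have hn : ((n : ℝ) + 1) ≠ 0 := by positivity
  calc (∮ z in C(0, R), z ^ n * g (z ^ (n + 1)))
      = ∫ θ in 0..2 * π, H ((n + 1 : ℕ) * θ) := by
        simp only [circleIntegral, H, deriv_circleMap, smul_eq_mul, ← circleMap_zero_pow]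
        congr 1; funext θ; ring
    _ = ((n + 1 : ℕ) : ℝ)⁻¹ • ∫ φ in 0..0 + ((n + 1 : ℕ) : ℤ) • (2 * π), H φ := by
        rw [integral_comp_mul_left _ (by positivity)]; congr 2 <;> simp
    _ = ∮ w in C(0, R ^ (n + 1)), g w := by
        rw [hper.intervalIntegral_add_zsmul_eq _ _ fun a b => hH.intervalIntegrable a b,
          zero_add, ← Int.cast_smul_eq_zsmul ℝ, smul_smul]
        push_cast
        rw [inv_mul_cancel₀ hn, one_smul]; rfl

theorem integral_sub_zpow_of_mem_ball {c w : ℂ} {R : ℝ} (hw : w ∈ ball c R) (n : ℤ) :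
    (∮ z in C(c, R), (z - w) ^ n) = if n = -1 then 2 * π * I else 0 := by
  split_ifs with hn
  · subst hn
    simpa using integral_sub_inv_of_mem_ball hw
  · exact integral_sub_zpow_of_ne hn c w R

theorem integral_pow_div_sub_pow {m n : ℕ} (hmn : m < n) {c a : ℂ} {R : ℝ}
    (ha : a ∈ ball c R) :
    (∮ w in C(c, R), w ^ m / (w - a) ^ n) = if m + 1 = n then 2 * π * I else 0 := by
  have ha' : a ∉ sphere c |R| := fun h =>
    ((mem_ball.mp ha).trans_le (le_abs_self R)).ne (mem_sphere.mp h)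
  have hexpand : Set.EqOn (fun w => w ^ m / (w - a) ^ n)
      (fun w => ∑ k ∈ Finset.range (m + 1),
        (m.choose k * a ^ (m - k) : ℂ) • (w - a) ^ ((k : ℤ) - n)) (sphere c R) := by
    intro w hw
    have hwa : w - a ≠ 0 :=
      sub_ne_zero.mpr (by rintro rfl; exact (mem_ball.mp ha).ne (mem_sphere.mp hw))
    simp only
    rw [show w = (w - a) + a by ring, add_pow, Finset.sum_div, add_sub_cancel_right]
    refine Finset.sum_congr rfl fun k _ => ?_
    rw [smul_eq_mul, zpow_sub₀ hwa, zpow_natCast, zpow_natCast]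
    ring
  rw [integral_congr (pos_of_mem_ball ha).le hexpand, integral_fun_sum]
  swap
  · exact fun k _ => (circleIntegrable_sub_zpow_iff.mpr (Or.inr (Or.inr ha'))).const_smul
  simp_rw [integral_smul, integral_sub_zpow_of_mem_ball ha, smul_eq_mul]
  rw [Finset.sum_eq_single m]
  · simp only [Nat.choose_self, Nat.sub_self, pow_zero, Nat.cast_one, one_mul,
      show (m : ℤ) - n = -1 ↔ m + 1 = n by omega]
  · intro k hk hkm
    rw [if_neg (by simp only [Finset.mem_range] at hk; omega), mul_zero]
  · simp

theorem integral_pow_div_sq_sub_pow {m n : ℕ} (hmn : m < 2 * n) {a : ℂ} {R : ℝ}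
    (ha : ‖a‖ < R ^ 2) :
    (∮ z in C(0, R), z ^ m / (z ^ 2 - a) ^ n) = if m + 1 = 2 * n then 2 * π * I else 0 := by
  obtain ⟨j, rfl | rfl⟩ := Nat.even_or_odd' m
  · rw [if_neg (by omega)]
    exact integral_eq_zero_of_even (fun z => by rw [neg_sq, pow_mul, pow_mul, neg_sq]) R
  · have ha' : a ∈ ball 0 (R ^ (1 + 1)) := mem_ball_zero_iff.mpr ha
    have hcont : ContinuousOn (fun w => w ^ j / (w - a) ^ n) (sphere 0 |R ^ (1 + 1)|) :=
      (continuousOn_pow j).div (by fun_prop) fun w hw => pow_ne_zero n <| sub_ne_zero.mpr <| by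
        rintro rfl
        simp only [mem_sphere_zero_iff_norm, Nat.reduceAdd, abs_pow, sq_abs] at hw
        exact ha.ne hw
    calc (∮ z in C(0, R), z ^ (2 * j + 1) / (z ^ 2 - a) ^ n)
        = ∮ z in C(0, R), z ^ 1 * (fun w => w ^ j / (w - a) ^ n) (z ^ (1 + 1)) := by
          congr 1; funext z; ring
      _ = if 2 * j + 1 + 1 = 2 * n then 2 * π * I else 0 := by
          rw [integral_pow_mul_comp_pow_succ 1 hcont, integral_pow_div_sub_pow (by omega) ha']
          simp only [show j + 1 = n ↔ 2 * j + 1 + 1 = 2 * n by omega]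

end circleIntegral

/-- For `l ≥ 1`, `t, u, v ∈ ℂ` and `R > |t|`,
`(1/2πi) ∮_{|z|=R} ((1−u)^l t^l z^{l−1} − (1−v)^l z^{2l−1}) / (z²+t²)^l dz = −(1−v)^l`. -/
theorem theta_residue_computation (l : ℕ) (hl : 1 ≤ l) (t u v : ℂ) (R : ℝ)
    (hR : ‖t‖ < R) :
    (1 / (2 * (Real.pi : ℂ) * Complex.I)) *
      (∮ z in C(0, R),
        ((1 - u) ^ l * t ^ l * z ^ (l - 1) - (1 - v) ^ l * z ^ (2 * l - 1)) /
          (z ^ 2 + t ^ 2) ^ l) = -(1 - v) ^ l := by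
  have ht : ‖-t ^ 2‖ < R ^ 2 := by
    rw [norm_neg, norm_pow]
    exact pow_lt_pow_left₀ hR (norm_nonneg t) two_ne_zero
  have hint (m : ℕ) (c : ℂ) :
      CircleIntegrable (fun z => c * (z ^ m / (z ^ 2 - -t ^ 2) ^ l)) 0 R :=
    (circleIntegrable_pow_div_sq_sub_pow m l ht).const_smul
  have hsplit : (∮ z in C(0, R),
      ((1 - u) ^ l * t ^ l * z ^ (l - 1) - (1 - v) ^ l * z ^ (2 * l - 1)) / (z ^ 2 + t ^ 2) ^ l)
      = (1 - u) ^ l * t ^ l * (∮ z in C(0, R), z ^ (l - 1) / (z ^ 2 - -t ^ 2) ^ l)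
        - (1 - v) ^ l * ∮ z in C(0, R), z ^ (2 * l - 1) / (z ^ 2 - -t ^ 2) ^ l := by
    rw [← circleIntegral.integral_const_mul, ← circleIntegral.integral_const_mul,
      ← circleIntegral.integral_sub (hint _ _) (hint _ _)]
    simp_rw [sub_neg_eq_add, sub_div, mul_div_assoc]
  rw [hsplit, circleIntegral.integral_pow_div_sq_sub_pow (by omega) ht,
    circleIntegral.integral_pow_div_sq_sub_pow (by omega) ht, if_neg (by omega), if_pos (by omega)]
  field_simp
  ring
end
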